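/- arXiv:1703.04326 — 2 statements merged into one kernel-verified Lean document; each statement's English description precedes it below -/
import Mathlib

section
/- Let g ∈ ℬ([0,∞)ⁿ). Then for each b > 0 the series Σ_{j∈ℤ₊ⁿ} e^{(g[e])*(j)} / (b^{|j|} j!) and Σ_{j∈ℤ₊ⁿ} e^{(g[e])*(j)} / (b^{|j|} |j|!) converge, where for a multi-index j = (j₁,…,jₙ) ∈ ℤ₊ⁿ, |j| = j₁+…+jₙ and j! = j₁!···jₙ!. -/
open Filter
open scoped BigOperators Topology

noncomputable section

abbrev En (n : ℕ) := EuclideanSpace ℝ (Fin n)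

/-- The closed positive orthant `[0,∞)ⁿ`. -/
def orthant (n : ℕ) : Set (En n) := {x | ∀ j, 0 ≤ x j}

/-- `g[e]`, the coordinatewise exponential substitution `g[e](x) = g(e^{x₁},…,e^{xₙ})`. -/
def expComp {n : ℕ} (g : En n → ℝ) : En n → ℝ := fun x => g (WithLp.toLp 2 (fun j => Real.exp (x j)))

/-- The Young–Fenchel conjugate `g*(x) = sup_y (⟨x,y⟩ - g(y))`. -/
def starC {n : ℕ} (g : En n → ℝ) (x : En n) : ℝ := ⨆ y : En n, (∑ j, x j * y j - g y)

/-- `g ∈ ℬ([0,∞)ⁿ)`: `g` is continuous on the orthant and `g(x)/‖x‖ → +∞`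
as `x → ∞` within the orthant. -/
def memB {n : ℕ} (g : En n → ℝ) : Prop :=
  ContinuousOn g (orthant n) ∧
    Tendsto (fun x : En n => g x / ‖x‖) (cocompact (En n) ⊓ 𝓟 (orthant n)) atTop


/-!
The growth condition on `g` gives, for every `c ≥ 0`, a constant `C` with
`c · ∑ xᵢ ≤ g x + C` on the orthant. Substituting `x = e^y`, the conjugate of `g[e]` at `j`
splits coordinatewise: `jᵢ yᵢ - c e^{yᵢ} ≤ log (jᵢ! / c^{jᵢ})`, which is the exponential series
bound `(c e^y)^k / k! ≤ exp (c e^y)`. Hence `e^{(g[e])*(j)} ≤ e^C ∏ jᵢ! / c^{jᵢ}`, and for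
`c = 2 / b` the first series is dominated by `e^C ∑ⱼ 2^{-|j|}`. Since `∏ jᵢ!` divides `|j|!`,
the second series is dominated by the first.
-/

theorem exists_mul_norm_le_add_of_tendsto_div_norm {E : Type*} [NormedAddCommGroup E]
    {f : E → ℝ} {s : Set E} (hs : IsClosed s) (hf : ContinuousOn f s)
    (hlim : Tendsto (fun x => f x / ‖x‖) (cocompact E ⊓ 𝓟 s) atTop) (M : ℝ) :
    ∃ C, ∀ x ∈ s, M * ‖x‖ ≤ f x + C := by
  -- `M' > 0` excludes `x = 0` (where `f x / ‖x‖ = 0`) from the region `M' ≤ f x / ‖x‖`.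
  set M' := max M 1
  have hM' : 0 < M' := lt_of_lt_of_le one_pos (le_max_right _ _)
  have hev := hlim.eventually (eventually_ge_atTop M')
  rw [eventually_inf_principal, Filter.eventually_iff, mem_cocompact] at hev
  obtain ⟨K, hK, hKc⟩ := hev
  obtain ⟨R, hR0, hR⟩ := hK.isBounded.exists_pos_norm_le
  obtain ⟨B, hB⟩ :=
    (hK.inter_right hs).exists_bound_of_continuousOn (hf.mono Set.inter_subset_right)
  refine ⟨|B| + M' * R, fun x hx => ?_⟩
  have hMM' : M * ‖x‖ ≤ M' * ‖x‖ := mul_le_mul_of_nonneg_right (le_max_left _ _) (norm_nonneg x)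
  by_cases hxK : x ∈ K
  · have hfx : -|B| ≤ f x :=
      (neg_le_neg (le_abs_self B)).trans (neg_le_of_abs_le (hB x ⟨hxK, hx⟩))
    nlinarith [hR x hxK]
  · have hdiv : M' ≤ f x / ‖x‖ := hKc hxK hx
    have hx0 : 0 < ‖x‖ := by
      by_contra! h
      rw [le_antisymm h (norm_nonneg x), div_zero] at hdiv
      linarith
    have := (le_div_iff₀ hx0).mp hdiv
    nlinarith [abs_nonneg B]

theorem isClosed_orthant (n : ℕ) : IsClosed (orthant n) := by
  simp only [orthant, Set.ofPred_forall]
  exact isClosed_iInter fun i => isClosed_le continuous_const (by fun_prop)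

theorem sum_apply_le_card_mul_norm {ι : Type*} [Fintype ι] {p : ENNReal} [Fact (1 ≤ p)]
    (x : PiLp p fun _ : ι => ℝ) : ∑ i, x i ≤ Fintype.card ι * ‖x‖ := by
  calc ∑ i, x i ≤ ∑ _i : ι, ‖x‖ :=
        Finset.sum_le_sum fun i _ => (le_abs_self _).trans (PiLp.norm_apply_le x i)
    _ = Fintype.card ι * ‖x‖ := by simp

theorem memB.exists_mul_sum_le_add {n : ℕ} {g : En n → ℝ} (hg : memB g) {c : ℝ} (hc : 0 ≤ c) :
    ∃ C, ∀ x ∈ orthant n, c * ∑ i, x i ≤ g x + C := by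
  obtain ⟨C, hC⟩ :=
    exists_mul_norm_le_add_of_tendsto_div_norm (isClosed_orthant n) hg.1 hg.2 (c * n)
  refine ⟨C, fun x hx => ?_⟩
  calc c * ∑ i, x i ≤ c * (n * ‖x‖) := by
        simpa using mul_le_mul_of_nonneg_left (sum_apply_le_card_mul_norm x) hc
    _ = c * n * ‖x‖ := by ring
    _ ≤ g x + C := hC x hx

theorem nat_mul_sub_mul_exp_le_log (k : ℕ) {c : ℝ} (hc : 0 < c) (y : ℝ) :
    k * y - c * Real.exp y ≤ Real.log (k.factorial / c ^ k) := by
  rw [Real.le_log_iff_exp_le (by positivity), Real.exp_sub, Real.exp_nat_mul,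
    div_le_div_iff₀ (Real.exp_pos _) (by positivity)]
  have := Real.pow_div_factorial_le_exp (x := c * Real.exp y) (by positivity) k
  rw [div_le_iff₀ (by positivity), mul_pow] at this
  linarith

theorem exp_starC_expComp_le {n : ℕ} {g : En n → ℝ} {c C : ℝ} (hc : 0 < c)
    (hC : ∀ x ∈ orthant n, c * ∑ i, x i ≤ g x + C) (j : Fin n → ℕ) :
    Real.exp (starC (expComp g) (WithLp.toLp 2 (fun i => (j i : ℝ)))) ≤
      Real.exp C * ∏ i, ((j i).factorial / c ^ j i) := by
  have hstar : starC (expComp g) (WithLp.toLp 2 (fun i => (j i : ℝ))) ≤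
      C + ∑ i, Real.log ((j i).factorial / c ^ j i) := by
    refine ciSup_le fun y => ?_
    have hgy := hC (WithLp.toLp 2 fun i => Real.exp (y i)) fun i => (Real.exp_pos (y i)).le
    have hlog := Finset.sum_le_sum fun i (_ : i ∈ Finset.univ) =>
      nat_mul_sub_mul_exp_le_log (j i) hc (y i)
    simp only [Finset.sum_sub_distrib, ← Finset.mul_sum] at hlog
    simp only [expComp]
    linarith
  calc _ ≤ Real.exp (C + ∑ i, Real.log ((j i).factorial / c ^ j i)) := Real.exp_le_exp.mpr hstar
    _ = _ := by
      rw [Real.exp_add, Real.exp_sum]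
      congr 1
      exact Finset.prod_congr rfl fun i _ => Real.exp_log (by positivity)

theorem summable_fin_prod_of_nonneg {α : Type*} {n : ℕ} {f : Fin n → α → ℝ}
    (hf0 : ∀ i a, 0 ≤ f i a) (hf : ∀ i, Summable (f i)) :
    Summable (fun x : Fin n → α => ∏ i, f i (x i)) := by
  induction n with
  | zero => exact Summable.of_finite
  | succ n ih =>
    have hprod : Summable (fun p : α × (Fin n → α) => f 0 p.1 * ∏ i : Fin n, f i.succ (p.2 i)) :=
      Summable.mul_of_nonneg (g := fun x : Fin n → α => ∏ i : Fin n, f i.succ (x i)) (hf 0)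
        (ih (fun i => hf0 i.succ) fun i => hf i.succ)
        (hf0 0) fun x => Finset.prod_nonneg fun i _ => hf0 _ _
    exact (Fin.consEquiv fun _ => α).summable_iff.mp
      (hprod.congr fun p => by simp [Fin.consEquiv, Fin.prod_univ_succ])

theorem exp_starC_expComp_div_le {n : ℕ} {g : En n → ℝ} {b c C : ℝ} (hb : 0 < b) (hc : 0 < c)
    (hC : ∀ x ∈ orthant n, c * ∑ i, x i ≤ g x + C) (j : Fin n → ℕ) :
    Real.exp (starC (expComp g) (WithLp.toLp 2 (fun i => (j i : ℝ)))) /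
        (b ^ (∑ i, j i) * (∏ i, Nat.factorial (j i) : ℝ)) ≤
      Real.exp C * ∏ i, (b * c)⁻¹ ^ j i := by
  calc _ ≤ Real.exp C * (∏ i, ((j i).factorial / c ^ j i)) /
        (b ^ (∑ i, j i) * (∏ i, Nat.factorial (j i) : ℝ)) :=
      div_le_div_of_nonneg_right (exp_starC_expComp_le hc hC j) (by positivity)
    _ = Real.exp C * ∏ i, (b * c)⁻¹ ^ j i := by
      rw [mul_div_assoc, ← Finset.prod_pow_eq_pow_sum, ← Finset.prod_mul_distrib,
        ← Finset.prod_div_distrib]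
      congr 1
      refine Finset.prod_congr rfl fun i _ => ?_
      rw [mul_inv, mul_pow, inv_pow, inv_pow]
      field_simp

theorem stmt7 (n : ℕ) (g : En n → ℝ) (hg : memB g) :
    ∀ b > (0:ℝ),
      Summable (fun j : Fin n → ℕ =>
        Real.exp (starC (expComp g) (WithLp.toLp 2 (fun i => (j i : ℝ)))) /
          (b ^ (∑ i, j i) * (∏ i, Nat.factorial (j i) : ℝ))) ∧
      Summable (fun j : Fin n → ℕ =>
        Real.exp (starC (expComp g) (WithLp.toLp 2 (fun i => (j i : ℝ)))) /
          (b ^ (∑ i, j i) * (Nat.factorial (∑ i, j i) : ℝ))) := by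
  intro b hb
  obtain ⟨C, hC⟩ := hg.exists_mul_sum_le_add (c := 2 / b) (by positivity)
  have hbc : (b * (2 / b))⁻¹ = 1 / 2 := by field_simp
  have hgeom : Summable fun j : Fin n → ℕ => Real.exp C * ∏ i, (b * (2 / b))⁻¹ ^ j i := by
    rw [hbc]
    exact (summable_fin_prod_of_nonneg (fun _ _ => by positivity)
      fun _ => summable_geometric_two).mul_left _
  have hprod : Summable fun j : Fin n → ℕ =>
      Real.exp (starC (expComp g) (WithLp.toLp 2 (fun i => (j i : ℝ)))) /
        (b ^ (∑ i, j i) * (∏ i, Nat.factorial (j i) : ℝ)) :=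
    hgeom.of_nonneg_of_le (fun j => by positivity)
      (exp_starC_expComp_div_le hb (by positivity) hC)
  refine ⟨hprod, hprod.of_nonneg_of_le (fun j => by positivity) fun j => ?_⟩
  have hfac : (∏ i, Nat.factorial (j i) : ℝ) ≤ (Nat.factorial (∑ i, j i) : ℝ) := by
    exact_mod_cast Nat.le_of_dvd (Nat.factorial_pos _) (Nat.prod_factorial_dvd_factorial_sum _ _)
  gcongr
end
end

section
/- Let u ∈ 𝒜(ℝⁿ) ∩ C²(ℝⁿ) be convex. Then for all x = (x₁,…,xₙ) ∈ [0,∞)ⁿ with x ≠ 0, (u[e])*(x) + (u*[e])*(x) = Σ_{1≤j≤n, x_j≠0} (x_j·ln x_j − x_j), and (u[e])*(0) + (u*[e])*(0) = 0. -/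
/-!
Fenchel–Young for `u` gives `u(e^a) + u*(e^b) ≥ ⟨e^a, e^b⟩`, so every pair `(a, b)` contributes at
most `∑ⱼ (xⱼ(aⱼ + bⱼ) - e^{aⱼ + bⱼ}) ≤ ∑ⱼ (xⱼ log xⱼ - xⱼ)`: this is the upper bound.

For `x` in the open orthant, `z ↦ ⟨x, z⟩ - u(e^z)` tends to `-∞` and has a maximiser `z`, where
stationarity reads `e^{zⱼ} ∂ⱼu(e^z) = xⱼ`. Then `b = log x - z` satisfies `e^b = ∇u(e^z)`, at which
the Fenchel equality `u*(∇u(t)) = ⟨∇u(t), t⟩ - u(t)` holds, and the pair `(z, b)` attains the bound.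

A point `x` on the boundary of the orthant is reached along the segment towards `x + 𝟙`, whose
other points lie in the open orthant: the left-hand side is convex in `x`, being a sum of
conjugates, and the right-hand side is continuous.
-/

open Filter
open scoped BigOperators Topology

noncomputable section

/-- `g ∈ ℬ(ℝⁿ)`: `g` is continuous on `ℝⁿ` and `g(x)/‖x‖ → +∞` as `x → ∞`. -/
def memBR {n : ℕ} (g : En n → ℝ) : Prop :=
  Continuous g ∧ Tendsto (fun x : En n => g x / ‖x‖) (cocompact (En n)) atTop

/-- `g ∈ 𝒜(ℝⁿ)`: `g` is continuous, depends only on the absolute values of the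
coordinates, is nondecreasing in each variable on the orthant, and `g(x)/‖x‖ → +∞`. -/
def IsA {n : ℕ} (g : En n → ℝ) : Prop :=
  Continuous g ∧ (∀ x : En n, g x = g (WithLp.toLp 2 (fun j => |x j|))) ∧
  (∀ x y : En n, (∀ j, 0 ≤ x j) → (∀ j, x j ≤ y j) → g x ≤ g y) ∧
  Tendsto (fun x : En n => g x / ‖x‖) (cocompact (En n)) atTop

open Real
open scoped Gradient

theorem exists_mul_norm_sub_le_of_tendsto_div_norm {E : Type*} [NormedAddCommGroup E]
    [ProperSpace E] {f : E → ℝ} (hc : Continuous f)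
    (h : Tendsto (fun x => f x / ‖x‖) (cocompact E) atTop) (M : ℝ) :
    ∃ A, ∀ x, M * ‖x‖ - A ≤ f x := by
  have hlim : Tendsto (fun x => f x - M * ‖x‖) (cocompact E) atTop := by
    have hprod := tendsto_norm_cocompact_atTop.atTop_mul_atTop₀
      (tendsto_atTop_add_const_right _ (-M) h)
    refine hprod.congr' ?_
    filter_upwards [tendsto_norm_cocompact_atTop.eventually_gt_atTop 0] with x hx
    field_simp
    ring
  obtain ⟨x₀, hx₀⟩ := Continuous.exists_forall_le (f := fun x => f x - M * ‖x‖) (by fun_prop) hlim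
  exact ⟨M * ‖x₀‖ - f x₀, fun x => by linarith [hx₀ x]⟩

theorem ConvexOn.add_fderiv_sub_le {E : Type*} [NormedAddCommGroup E] [NormedSpace ℝ E]
    {u : E → ℝ} (hconv : ConvexOn ℝ Set.univ u) {t : E} (hd : DifferentiableAt ℝ u t) (y : E) :
    u t + fderiv ℝ u t (y - t) ≤ u y := by
  have hline : ConvexOn ℝ Set.univ (u ∘ AffineMap.lineMap (k := ℝ) t y) := by
    simpa using hconv.comp_affineMap (AffineMap.lineMap (k := ℝ) t y)
  have hderiv : HasDerivAt (u ∘ AffineMap.lineMap (k := ℝ) t y) (fderiv ℝ u t (y - t)) 0 := by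
    refine HasFDerivAt.comp_hasDerivAt (0 : ℝ) ?_ ?_
    · simpa using hd.hasFDerivAt
    · simpa using AffineMap.hasDerivAt_lineMap (a := t) (b := y) (x := (0 : ℝ))
  have := hline.le_slope_of_hasDerivAt (Set.mem_univ 0) (Set.mem_univ 1) one_pos hderiv
  simp only [slope_def_field, Function.comp_apply, AffineMap.lineMap_apply_zero,
    AffineMap.lineMap_apply_one, sub_zero, div_one] at this
  linarith

section

variable {n : ℕ}

theorem sum_mul_eq_inner (x y : En n) : ∑ j, x j * y j = inner ℝ x y := by
  simp [PiLp.inner_apply, mul_comm]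

theorem norm_le_sum_abs (x : En n) : ‖x‖ ≤ ∑ j, |x j| := by
  calc ‖x‖ = ‖∑ j, x j • EuclideanSpace.single j (1 : ℝ)‖ := by
        congr 1; ext k; simp [Pi.single_apply]
    _ ≤ ∑ j, ‖x j • EuclideanSpace.single j (1 : ℝ)‖ := norm_sum_le _ _
    _ = ∑ j, |x j| := by simp [norm_smul]

theorem starC_le {g : En n → ℝ} {x : En n} {a : ℝ}
    (h : ∀ y, ∑ j, x j * y j - g y ≤ a) : starC g x ≤ a := ciSup_le h

theorem le_starC {g : En n → ℝ} {x : En n}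
    (hb : BddAbove (Set.range fun y => ∑ j, x j * y j - g y)) (y : En n) :
    ∑ j, x j * y j - g y ≤ starC g x := le_ciSup hb y

theorem IsA.memBR {u : En n → ℝ} (hu : IsA u) : memBR u := ⟨hu.1, hu.2.2.2⟩

theorem bddAbove_of_memBR {u : En n → ℝ} (hu : memBR u) (s : En n) :
    BddAbove (Set.range fun y => ∑ j, s j * y j - u y) := by
  obtain ⟨A, hA⟩ := exists_mul_norm_sub_le_of_tendsto_div_norm hu.1 hu.2 ‖s‖
  refine ⟨A, Set.forall_mem_range.2 fun y => ?_⟩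
  have := real_inner_le_norm s y
  rw [← sum_mul_eq_inner] at this
  linarith [hA y]

theorem starC_convexComb_le (g : En n → ℝ) {x y : En n}
    (hx : BddAbove (Set.range fun a => ∑ j, x j * a j - g a))
    (hy : BddAbove (Set.range fun a => ∑ j, y j * a j - g a))
    {α β : ℝ} (hα : 0 ≤ α) (hβ : 0 ≤ β) (hαβ : α + β = 1) :
    starC g (α • x + β • y) ≤ α * starC g x + β * starC g y := by
  refine starC_le fun a => ?_
  have hsplit : ∑ j, (α • x + β • y) j * a j - g a
      = α * (∑ j, x j * a j - g a) + β * (∑ j, y j * a j - g a) := by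
    simp only [PiLp.add_apply, PiLp.smul_apply, smul_eq_mul, add_mul, Finset.sum_add_distrib,
      mul_assoc, ← Finset.mul_sum]
    linear_combination (g a) * hαβ
  rw [hsplit]
  gcongr
  exacts [le_starC hx a, le_starC hy a]

theorem starC_gradient {u : En n → ℝ} (hconv : ConvexOn ℝ Set.univ u) {t : En n}
    (hd : DifferentiableAt ℝ u t) : starC u (∇ u t) = ∑ j, (∇ u t) j * t j - u t := by
  have hmax : ∀ y, ∑ j, (∇ u t) j * y j - u y ≤ ∑ j, (∇ u t) j * t j - u t := by
    intro y
    have h := hconv.add_fderiv_sub_le hd y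
    rw [← inner_gradient_left, ← sum_mul_eq_inner] at h
    simp only [PiLp.sub_apply, mul_sub, Finset.sum_sub_distrib] at h
    linarith
  exact le_antisymm (starC_le hmax) (le_starC ⟨_, Set.forall_mem_range.2 hmax⟩ t)

def expVec (z : En n) : En n := WithLp.toLp 2 fun j => exp (z j)

theorem expComp_apply (g : En n → ℝ) (z : En n) : expComp g z = g (expVec z) := rfl

theorem continuous_expVec : Continuous (expVec (n := n)) := by
  unfold expVec; fun_prop

theorem expVec_add_smul_single (z : En n) (j : Fin n) (θ : ℝ) :
    expVec (z + θ • EuclideanSpace.single j 1) =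
      expVec z + (exp (z j) * (exp θ - 1)) • EuclideanSpace.single j 1 := by
  ext k
  by_cases hk : k = j
  · subst hk; simp [expVec, exp_add]; ring
  · simp [expVec, hk]

-- As `log 0 = 0` in Lean, the summand vanishes where `x j = 0`, as it does by continuity.
def negEntropy (x : En n) : ℝ := ∑ j, (x j * log (x j) - x j)

theorem continuous_negEntropy : Continuous (negEntropy (n := n)) :=
  continuous_finsetSum _ fun j _ => (continuous_mul_log.comp (by fun_prop)).sub (by fun_prop)

theorem mul_sub_exp_le {x : ℝ} (hx : 0 ≤ x) (c : ℝ) : x * c - exp c ≤ x * log x - x := by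
  rcases hx.eq_or_lt with rfl | hx
  · simp [(exp_pos c).le]
  · have h := add_one_le_exp (c - log x)
    rw [exp_sub, exp_log hx, le_div_iff₀ hx] at h
    linarith

theorem sum_mul_sub_expComp_add_le_negEntropy {u : En n → ℝ} (hu : memBR u) {x : En n}
    (hx : ∀ j, 0 ≤ x j) (a b : En n) :
    (∑ j, x j * a j - expComp u a) + (∑ j, x j * b j - expComp (starC u) b) ≤ negEntropy x := by
  have hyoung : ∑ j, exp (b j) * exp (a j) - u (expVec a) ≤ starC u (expVec b) :=
    le_starC (bddAbove_of_memBR hu (expVec b)) (expVec a)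
  have hterm : ∀ j, x j * a j + x j * b j - exp (b j) * exp (a j) ≤ x j * log (x j) - x j := by
    intro j
    rw [← exp_add, add_comm (b j), ← mul_add]
    exact mul_sub_exp_le (hx j) _
  have hsum := Finset.sum_le_sum fun j (_ : j ∈ Finset.univ) => hterm j
  simp only [Finset.sum_sub_distrib, Finset.sum_add_distrib] at hsum
  rw [expComp_apply, expComp_apply, negEntropy, Finset.sum_sub_distrib]
  linarith

theorem bddAbove_expComp {u : En n → ℝ} (hu : memBR u) {x : En n} (hx : ∀ j, 0 ≤ x j) :
    BddAbove (Set.range fun a => ∑ j, x j * a j - expComp u a) :=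
  ⟨_, Set.forall_mem_range.2 fun a =>
    le_sub_iff_add_le.2 (sum_mul_sub_expComp_add_le_negEntropy hu hx a 0)⟩

theorem bddAbove_expComp_starC {u : En n → ℝ} (hu : memBR u) {x : En n}
    (hx : ∀ j, 0 ≤ x j) :
    BddAbove (Set.range fun b => ∑ j, x j * b j - expComp (starC u) b) :=
  ⟨_, Set.forall_mem_range.2 fun b =>
    le_sub_iff_add_le'.2 (sum_mul_sub_expComp_add_le_negEntropy hu hx 0 b)⟩

theorem starC_expComp_add_starC_expComp_le {u : En n → ℝ} (hu : memBR u) {x : En n}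
    (hx : ∀ j, 0 ≤ x j) :
    starC (expComp u) x + starC (expComp (starC u)) x ≤ negEntropy x := by
  have hleft : ∀ b, starC (expComp u) x
      ≤ negEntropy x - (∑ j, x j * b j - expComp (starC u) b) := fun b =>
    starC_le fun a => le_sub_iff_add_le.2 (sum_mul_sub_expComp_add_le_negEntropy hu hx a b)
  have hright : starC (expComp (starC u)) x ≤ negEntropy x - starC (expComp u) x :=
    starC_le fun b => by linarith [hleft b]
  linarith

theorem mul_sub_exp_le_sub_mul_abs {x m : ℝ} (hm : 0 ≤ m) (hmx : m ≤ x) (hm1 : m ≤ 1) (c : ℝ) :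
    x * c - exp c ≤ |(x + 1) * log (x + 1) - (x + 1)| - m * |c| := by
  have hK := le_abs_self ((x + 1) * log (x + 1) - (x + 1))
  rcases le_or_gt 0 c with hc | hc
  · have := mul_sub_exp_le (by linarith : 0 ≤ x + 1) c
    rw [abs_of_nonneg hc]
    nlinarith
  · rw [abs_of_neg hc]
    nlinarith [exp_pos c, abs_nonneg ((x + 1) * log (x + 1) - (x + 1))]

theorem exists_sum_exp_sub_le {u : En n → ℝ} (hu : memBR u) :
    ∃ A, ∀ w, ∑ j, exp (w j) - A ≤ u (expVec w) := by
  obtain ⟨A, hA⟩ := exists_mul_norm_sub_le_of_tendsto_div_norm hu.1 hu.2 n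
  refine ⟨A, fun w => le_trans ?_ (hA (expVec w))⟩
  have : ∑ j, exp (w j) ≤ ∑ _j : Fin n, ‖expVec w‖ := Finset.sum_le_sum fun j _ =>
    (le_abs_self _).trans (PiLp.norm_apply_le (expVec w) j)
  simp only [Finset.sum_const, Finset.card_univ, Fintype.card_fin, nsmul_eq_mul] at this
  linarith

theorem exists_forall_sum_mul_sub_expComp_le {u : En n → ℝ} (hu : memBR u) {x : En n}
    (hx : ∀ j, 0 < x j) :
    ∃ z, ∀ w, ∑ j, x j * w j - expComp u w ≤ ∑ j, x j * z j - expComp u z := by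
  obtain ⟨m, hm0, hm⟩ : ∃ m > 0, ∀ j, m ≤ x j ∧ m ≤ 1 := by
    have hev : ∀ j, ∀ᶠ m in 𝓝[>] (0 : ℝ), m ≤ x j ∧ m ≤ 1 := fun j =>
      nhdsWithin_le_nhds ((eventually_le_nhds (hx j)).and (eventually_le_nhds one_pos))
    exact ((eventually_mem_nhdsWithin (s := Set.Ioi 0)).and (Filter.eventually_all.2 hev)).exists
  obtain ⟨A, hA⟩ := exists_sum_exp_sub_le hu
  set C := A + ∑ j, |(x j + 1) * log (x j + 1) - (x j + 1)|
  have hbound : ∀ w, ∑ j, x j * w j - expComp u w ≤ C - m * ‖w‖ := by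
    intro w
    have hterm := Finset.sum_le_sum fun j (_ : j ∈ Finset.univ) =>
      mul_sub_exp_le_sub_mul_abs hm0.le (hm j).1 (hm j).2 (w j)
    have hnorm := mul_le_mul_of_nonneg_left (norm_le_sum_abs w) hm0.le
    simp only [Finset.sum_sub_distrib, ← Finset.mul_sum] at hterm
    rw [expComp_apply]
    linarith [hA w]
  have hlim : Tendsto (fun w => C - m * ‖w‖) (cocompact (En n)) atBot := by
    simpa [sub_eq_add_neg] using tendsto_atBot_add_const_left _ C
      (tendsto_neg_atTop_atBot.comp (tendsto_norm_cocompact_atTop.const_mul_atTop hm0))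
  have hcont : Continuous fun w => ∑ j, x j * w j - expComp u w := by
    simp only [expComp_apply]
    exact (continuous_finsetSum _ fun j _ => continuous_const.mul (by fun_prop)).sub
      (hu.1.comp continuous_expVec)
  exact hcont.exists_forall_ge (tendsto_atBot_mono hbound hlim)

theorem exp_mul_gradient_eq_of_isMax {u : En n → ℝ} {x z : En n}
    (hd : DifferentiableAt ℝ u (expVec z))
    (hmax : ∀ w, ∑ k, x k * w k - expComp u w ≤ ∑ k, x k * z k - expComp u z) (j : Fin n) :
    exp (z j) * (∇ u (expVec z)) j = x j := by
  set e : En n := EuclideanSpace.single j 1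
  set c := exp (z j)
  set g := fun θ : ℝ => ∑ k, x k * (z + θ • e) k - expComp u (z + θ • e)
  have hg : g = fun θ => ∑ k, x k * z k + θ * x j - u (expVec z + (c * (exp θ - 1)) • e) := by
    funext θ
    simp [g, e, c, expComp_apply, expVec_add_smul_single, mul_add, Finset.sum_add_distrib,
      mul_comm]
  have hcurve : HasDerivAt (fun θ => expVec z + (c * (exp θ - 1)) • e) (c • e) 0 := by
    simpa using ((((hasDerivAt_exp 0).sub_const 1).const_mul c).smul_const e).const_add (expVec z)
  have hderiv : HasDerivAt g (x j - c * (∇ u (expVec z)) j) 0 := by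
    have hu := (show HasFDerivAt u (fderiv ℝ u (expVec z)) (expVec z + (c * (exp 0 - 1)) • e) by
      simpa using hd.hasFDerivAt).comp_hasDerivAt 0 hcurve
    rw [map_smul, ← inner_gradient_left, EuclideanSpace.inner_single_right, smul_eq_mul,
      one_mul, conj_trivial] at hu
    rw [hg]
    exact ((hasDerivAt_mul_const (x j)).const_add (∑ k, x k * z k)).sub hu
  have hloc : IsLocalMax g 0 := Filter.Eventually.of_forall fun θ => by
    simpa [g] using hmax (z + θ • e)
  linarith [hloc.hasDerivAt_eq_zero hderiv]

theorem negEntropy_le_starC_expComp_add_of_pos {u : En n → ℝ} (hu : memBR u)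
    (hconv : ConvexOn ℝ Set.univ u) (hdiff : Differentiable ℝ u) {x : En n} (hx : ∀ j, 0 < x j) :
    negEntropy x ≤ starC (expComp u) x + starC (expComp (starC u)) x := by
  obtain ⟨z, hz⟩ := exists_forall_sum_mul_sub_expComp_le hu hx
  set t := expVec z
  have hstat := exp_mul_gradient_eq_of_isMax (hdiff t) hz
  set b : En n := WithLp.toLp 2 fun j => log (x j) - z j
  have hb : expVec b = ∇ u t := by
    ext j
    rw [← mul_left_cancel_iff_of_pos (exp_pos (z j)), hstat]
    simp [expVec, b, exp_sub, exp_log (hx j), mul_div_cancel₀ _ (exp_pos _).ne']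
  have hx0 : ∀ j, 0 ≤ x j := fun j => (hx j).le
  have ha := le_starC (bddAbove_expComp hu hx0) z
  have hb' := le_starC (bddAbove_expComp_starC hu hx0) b
  rw [expComp_apply, hb, starC_gradient hconv (hdiff t)] at hb'
  have hsum : ∑ j, x j * z j + ∑ j, x j * b j - ∑ j, (∇ u t) j * t j = negEntropy x := by
    rw [negEntropy, ← Finset.sum_add_distrib, ← Finset.sum_sub_distrib]
    refine Finset.sum_congr rfl fun j _ => ?_
    have hj : (∇ u t) j * t j = x j := (mul_comm _ _).trans (hstat j)
    rw [hj]
    simp only [b]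
    ring
  rw [expComp_apply] at ha
  linarith

theorem starC_expComp_add_starC_expComp_eq_negEntropy {u : En n → ℝ} (hu : memBR u)
    (hconv : ConvexOn ℝ Set.univ u) (hdiff : Differentiable ℝ u) {x : En n}
    (hx : ∀ j, 0 ≤ x j) :
    starC (expComp u) x + starC (expComp (starC u)) x = negEntropy x := by
  set F := fun v => starC (expComp u) v + starC (expComp (starC u)) v
  refine le_antisymm (starC_expComp_add_starC_expComp_le hu hx) ?_
  set y : En n := x + WithLp.toLp 2 fun _ => 1
  have hy : ∀ j, 0 ≤ y j := fun j => by simp [y]; linarith [hx j]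
  set p : ℝ → En n := fun s => (1 - s) • x + s • y
  have hp : ∀ s ∈ Set.Ioo (0 : ℝ) 1, negEntropy (p s) ≤ (1 - s) * F x + s * F y := by
    intro s hs
    have hps : ∀ j, 0 < p s j := fun j => by simp [p, y]; linarith [hx j, hs.1]
    have h₁ := starC_convexComb_le (expComp u) (bddAbove_expComp hu hx)
      (bddAbove_expComp hu hy) (sub_nonneg.2 hs.2.le) hs.1.le (sub_add_cancel 1 s)
    have h₂ := starC_convexComb_le (expComp (starC u)) (bddAbove_expComp_starC hu hx)
      (bddAbove_expComp_starC hu hy) (sub_nonneg.2 hs.2.le) hs.1.le (sub_add_cancel 1 s)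
    have := negEntropy_le_starC_expComp_add_of_pos hu hconv hdiff hps
    simp only [F, p] at *
    linarith
  have hp0 : Tendsto (fun s => negEntropy (p s)) (𝓝[>] 0) (𝓝 (negEntropy x)) := by
    have hc : Continuous fun s => negEntropy (p s) := continuous_negEntropy.comp (by fun_prop)
    simpa [p] using (hc.tendsto 0).mono_left nhdsWithin_le_nhds
  have hF0 : Tendsto (fun s => (1 - s) * F x + s * F y) (𝓝[>] 0) (𝓝 (F x)) := by
    have hc : Continuous fun s : ℝ => (1 - s) * F x + s * F y := by fun_prop
    simpa using (hc.tendsto 0).mono_left nhdsWithin_le_nhds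
  exact le_of_tendsto_of_tendsto hp0 hF0 (eventually_of_mem (Ioo_mem_nhdsGT one_pos) hp)

end

theorem stmt14 (n : ℕ) (u : En n → ℝ) (hu : IsA u)
    (hC2 : ContDiff ℝ 2 u) (hconv : ConvexOn ℝ Set.univ u) :
    (∀ x ∈ orthant n, x ≠ 0 →
      starC (expComp u) x + starC (expComp (starC u)) x =
        ∑ j ∈ Finset.univ.filter (fun j : Fin n => x j ≠ 0),
          (x j * Real.log (x j) - x j)) ∧
    starC (expComp u) 0 + starC (expComp (starC u)) 0 = 0 := by
  have key : ∀ x ∈ orthant n,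
      starC (expComp u) x + starC (expComp (starC u)) x = negEntropy x := fun _ hx =>
    starC_expComp_add_starC_expComp_eq_negEntropy hu.memBR hconv
      (hC2.differentiable two_ne_zero) hx
  refine ⟨fun x hx _ => ?_, by simpa [negEntropy] using key 0 fun _ => le_rfl⟩
  rw [key x hx, negEntropy, Finset.sum_filter_of_ne]
  intro j _ hj hxj
  exact hj (by simp [hxj])
end
end
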